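/- arXiv:2504.14124 — 2 statements merged into one kernel-verified Lean document; each statement's English description precedes it below -/
import Mathlib

section
/- Let G be a cubic graph on n ≥ 8 vertices admitting a self-identifying code. Then SIC(G) = n if and only if V(G) can be partitioned into vertex-disjoint triangles. -/
def closedNbhd {V : Type*} (G : SimpleGraph V) (v : V) : Set V :=
  insert v (G.neighborSet v)

def IsSIC {V : Type*} (G : SimpleGraph V) (S : Set V) : Prop :=
  (∀ x : V, (closedNbhd G x ∩ S).Nonempty) ∧
    ∀ u v : V, u ≠ v →
      ((closedNbhd G u ∩ S) \ (closedNbhd G v ∩ S)).Nonempty ∧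
      ((closedNbhd G v ∩ S) \ (closedNbhd G u ∩ S)).Nonempty

def IsTriangle {V : Type*} [DecidableEq V] (G : SimpleGraph V) (t : Finset V) : Prop :=
  t.card = 3 ∧ ∀ u ∈ t, ∀ v ∈ t, u ≠ v → G.Adj u v

/-!
A vertex `v` lies in every self-identifying code iff it is forced, i.e. `N[u] \ N[w] ⊆ {v}` for
some `u ≠ w`; otherwise `V \ {v}` is still a code. So `SIC(G) = n` iff every vertex is forced.

In a cubic graph without semi-closed twins two adjacent vertices have at most one common
neighbour, hence every vertex lies in at most one triangle, and a forced vertex either has an open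
twin or is adjacent to a triangle avoiding it. If all vertices are forced, a vertex adjacent to such
a triangle lies in a triangle itself, while a vertex with an open twin lies in none and makes its
component `K₃,₃`, which `n ≥ 8` excludes. Conversely, if the triangles partition `V`, the third
neighbour `c` of `v` lies in a triangle `{c, c₁, c₂}`, and `N[c] \ N[c₁] = {v}`.
-/

open Finset SimpleGraph

section General

variable {V : Type*} {G : SimpleGraph V}

def SemiClosedTwinFree (G : SimpleGraph V) : Prop :=
  ∀ u w, u ≠ w → ¬ closedNbhd G u ⊆ closedNbhd G w

def IsForced (G : SimpleGraph V) (v : V) : Prop :=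
  ∃ u w, u ≠ w ∧ closedNbhd G u \ closedNbhd G w ⊆ {v}

lemma mem_closedNbhd {u x : V} : x ∈ closedNbhd G u ↔ x = u ∨ G.Adj u x := by
  simp [closedNbhd]

lemma self_mem_closedNbhd (u : V) : u ∈ closedNbhd G u := Set.mem_insert u _

lemma IsSIC.mono {S T : Set V} (hS : IsSIC G S) (hST : S ⊆ T) : IsSIC G T := by
  have sep : ∀ u w, u ≠ w → ((closedNbhd G u ∩ T) \ (closedNbhd G w ∩ T)).Nonempty := by
    intro u w huw
    obtain ⟨y, ⟨hyu, hyS⟩, hyw⟩ := (hS.2 u w huw).1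
    exact ⟨y, ⟨hyu, hST hyS⟩, fun hy => hyw ⟨hy.1, hyS⟩⟩
  refine ⟨fun x => ?_, fun u w huw => ⟨sep u w huw, sep w u huw.symm⟩⟩
  obtain ⟨y, hyx, hyS⟩ := hS.1 x
  exact ⟨y, hyx, hST hyS⟩

lemma IsSIC.semiClosedTwinFree {S : Set V} (hS : IsSIC G S) : SemiClosedTwinFree G := by
  intro u w huw hsub
  obtain ⟨y, ⟨hyu, hyS⟩, hyw⟩ := (hS.2 u w huw).1
  exact hyw ⟨hsub hyu, hyS⟩

lemma IsSIC.mem_of_isForced {S : Set V} (hS : IsSIC G S) {v : V} (hv : IsForced G v) :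
    v ∈ S := by
  obtain ⟨u, w, huw, hsub⟩ := hv
  obtain ⟨y, ⟨hyu, hyS⟩, hyw⟩ := (hS.2 u w huw).1
  obtain rfl : y = v := hsub ⟨hyu, fun hy => hyw ⟨hy, hyS⟩⟩
  exact hyS

lemma isSIC_compl_singleton {v a : V} (hva : G.Adj v a) (hv : ¬ IsForced G v) :
    IsSIC G {v}ᶜ := by
  have sep : ∀ u w, u ≠ w → ((closedNbhd G u ∩ {v}ᶜ) \ (closedNbhd G w ∩ {v}ᶜ)).Nonempty := by
    intro u w huw
    by_contra hempty
    refine hv ⟨u, w, huw, fun y ⟨hyu, hyw⟩ => ?_⟩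
    by_contra hyv
    exact hempty ⟨y, ⟨hyu, hyv⟩, fun hy => hyw hy.1⟩
  refine ⟨fun x => ?_, fun u w huw => ⟨sep u w huw, sep w u huw.symm⟩⟩
  by_cases hxv : x = v
  · subst hxv
    exact ⟨a, mem_closedNbhd.2 (Or.inr hva), hva.ne'⟩
  · exact ⟨x, self_mem_closedNbhd x, hxv⟩

lemma sInf_ncard_isSIC_eq_card_iff [Fintype V] (hadmits : ∃ S : Set V, IsSIC G S)
    (hdeg : ∀ v, ∃ a, G.Adj v a) :
    sInf {m : ℕ | ∃ S : Set V, IsSIC G S ∧ S.ncard = m} = Fintype.card V ↔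
      ∀ v, IsForced G v := by
  have huniv : IsSIC G Set.univ := hadmits.elim fun S hS => hS.mono (Set.subset_univ S)
  have hcard : (Set.univ : Set V).ncard = Fintype.card V := by
    rw [Set.ncard_univ, Nat.card_eq_fintype_card]
  constructor
  · intro hinf v
    by_contra hv
    obtain ⟨a, hva⟩ := hdeg v
    have hle : sInf {m : ℕ | ∃ S : Set V, IsSIC G S ∧ S.ncard = m} ≤ ({v}ᶜ : Set V).ncard :=
      Nat.sInf_le ⟨_, isSIC_compl_singleton hva hv, rfl⟩
    rw [hinf, Set.ncard_compl, Nat.card_eq_fintype_card, Set.ncard_singleton] at hle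
    have : 0 < Fintype.card V := Fintype.card_pos_iff.2 ⟨v⟩
    omega
  · intro hforced
    have hset : {m : ℕ | ∃ S : Set V, IsSIC G S ∧ S.ncard = m} = {Fintype.card V} := by
      ext m
      refine ⟨?_, fun hm => ⟨Set.univ, huniv, hcard.trans hm.symm⟩⟩
      rintro ⟨S, hS, rfl⟩
      rw [Set.eq_univ_of_forall fun v => hS.mem_of_isForced (hforced v), hcard]
      exact Set.mem_singleton _
    rw [hset, csInf_singleton]

end General

section Triangles

variable {V : Type*} [DecidableEq V] {G : SimpleGraph V}

def InTriangle (G : SimpleGraph V) (v : V) : Prop :=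
  ∃ t, IsTriangle G t ∧ v ∈ t

def AdjToTriangle (G : SimpleGraph V) (v : V) : Prop :=
  ∃ u t, G.Adj v u ∧ IsTriangle G t ∧ u ∈ t ∧ v ∉ t

lemma isTriangle_insert_insert_singleton {a b c : V} (hab : G.Adj a b) (hac : G.Adj a c)
    (hbc : G.Adj b c) : IsTriangle G {a, b, c} := by
  refine ⟨card_eq_three.2 ⟨a, b, c, hab.ne, hac.ne, hbc.ne, rfl⟩, ?_⟩
  simp only [mem_insert, mem_singleton]
  rintro x (rfl | rfl | rfl) y (rfl | rfl | rfl) hxy <;> first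
    | exact absurd rfl hxy | assumption | exact SimpleGraph.Adj.symm ‹_›

lemma IsTriangle.card_erase {t : Finset V} (ht : IsTriangle G t) {v : V} (hv : v ∈ t) :
    (t.erase v).card = 2 := by
  rw [card_erase_of_mem hv, ht.1]

lemma IsTriangle.eq_of_mem_of_mem {t₁ t₂ : Finset V} (ht₁ : IsTriangle G t₁)
    (ht₂ : IsTriangle G t₂) {v x : V} (hvx : v ≠ x)
    (hsub : (G.commonNeighbors v x).Subsingleton)
    (hv₁ : v ∈ t₁) (hx₁ : x ∈ t₁) (hv₂ : v ∈ t₂) (hx₂ : x ∈ t₂) : t₁ = t₂ := by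
  obtain ⟨y, hy₂, hy⟩ : ∃ y ∈ t₂, y ∉ ({v, x} : Finset V) :=
    exists_mem_notMem_of_card_lt_card (by rw [ht₂.1]; exact card_le_two.trans_lt (by norm_num))
  refine eq_of_subset_of_card_le (fun z hz => ?_) (by rw [ht₁.1, ht₂.1])
  by_cases hz' : z ∈ ({v, x} : Finset V)
  · rcases mem_insert.1 hz' with rfl | hz'
    · exact hv₂
    · rwa [mem_singleton.1 hz']
  · simp only [mem_insert, mem_singleton, not_or] at hy hz'
    have hcommon : ∀ {t : Finset V} {y : V}, IsTriangle G t → v ∈ t → x ∈ t → y ∈ t →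
        y ≠ v → y ≠ x → y ∈ G.commonNeighbors v x := fun ht hv hx hy hyv hyx =>
      (G.mem_commonNeighbors).2 ⟨ht.2 v hv _ hy (Ne.symm hyv), ht.2 x hx _ hy (Ne.symm hyx)⟩
    rw [hsub (hcommon ht₁ hv₁ hx₁ hz hz'.1 hz'.2) (hcommon ht₂ hv₂ hx₂ hy₂ hy.1 hy.2)]
    exact hy₂

variable [Fintype V] [DecidableRel G.Adj]

lemma IsTriangle.erase_subset_neighborFinset {t : Finset V} (ht : IsTriangle G t) {v : V}
    (hv : v ∈ t) : t.erase v ⊆ G.neighborFinset v := fun x hx =>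
  (G.mem_neighborFinset v x).2 (ht.2 v hv x (mem_of_mem_erase hx) (ne_of_mem_erase hx).symm)

end Triangles

lemma Finset.apply_eq_apply_of_card_eq_three {α β : Type*} [DecidableEq α] {s : Finset α}
    (f : α → β) (hs : s.card = 3) (h : ∀ a ∈ s, ∃ b ∈ s, b ≠ a ∧ f a = f b) {a b : α}
    (ha : a ∈ s) (hb : b ∈ s) : f a = f b := by
  by_cases hab : a = b
  · rw [hab]
  by_contra hf
  obtain ⟨a', ha', ha'a, hfa⟩ := h a ha
  obtain ⟨b', hb', hb'b, hfb⟩ := h b hb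
  have hrest : ((s.erase a).erase b).card = 1 := by
    rw [card_erase_of_mem (mem_erase.2 ⟨Ne.symm hab, hb⟩), card_erase_of_mem ha, hs]
  have ha'_mem : a' ∈ (s.erase a).erase b :=
    mem_erase.2 ⟨fun h => hf (by rw [hfa, h]), mem_erase.2 ⟨ha'a, ha'⟩⟩
  have hb'_mem : b' ∈ (s.erase a).erase b :=
    mem_erase.2 ⟨hb'b, mem_erase.2 ⟨fun h => hf (by rw [hfb, h]), hb'⟩⟩
  exact hf (by rw [hfa, card_le_one.1 hrest.le a' ha'_mem b' hb'_mem, hfb])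

lemma SimpleGraph.Connected.mem_of_forall_adj_mem {V : Type*} {G : SimpleGraph V}
    (hG : G.Connected) {U : Set V} {u : V} (hu : u ∈ U)
    (hU : ∀ x ∈ U, ∀ y, G.Adj x y → y ∈ U) (y : V) : y ∈ U := by
  obtain ⟨p⟩ := hG u y
  induction p with
  | nil => exact hu
  | cons h _ ih => exact ih (hU _ hu _ h)

section Cubic

variable {V : Type*} [Fintype V] [DecidableEq V] {G : SimpleGraph V} [DecidableRel G.Adj]

def HasOpenTwin (G : SimpleGraph V) [DecidableRel G.Adj] (v : V) : Prop :=
  ∃ w, w ≠ v ∧ G.neighborFinset v = G.neighborFinset w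

lemma neighborFinset_eq_of_adj (hcubic : G.IsRegularOfDegree 3) {v a b c : V}
    (ha : G.Adj v a) (hb : G.Adj v b) (hc : G.Adj v c) (hab : a ≠ b) (hac : a ≠ c)
    (hbc : b ≠ c) : G.neighborFinset v = {a, b, c} := by
  refine (eq_of_subset_of_card_le ?_ ?_).symm
  · simp only [insert_subset_iff, singleton_subset_iff, mem_neighborFinset]
    exact ⟨ha, hb, hc⟩
  · rw [card_neighborFinset_eq_degree, hcubic v, card_eq_three.2 ⟨a, b, c, hab, hac, hbc, rfl⟩]

lemma SemiClosedTwinFree.commonNeighbors_subsingleton (hfree : SemiClosedTwinFree G)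
    (hcubic : G.IsRegularOfDegree 3) {p q : V} (hpq : G.Adj p q) :
    (G.commonNeighbors p q).Subsingleton := by
  intro x hx y hy
  rw [mem_commonNeighbors] at hx hy
  by_contra hxy
  have hN := neighborFinset_eq_of_adj hcubic hpq hx.1 hy.1 hx.2.ne hy.2.ne hxy
  refine hfree p q hpq.ne fun z hz => ?_
  rcases mem_closedNbhd.1 hz with rfl | hz
  · exact mem_closedNbhd.2 (Or.inr hpq.symm)
  · rw [← mem_neighborFinset, hN] at hz
    simp only [mem_insert, mem_singleton] at hz
    rcases hz with rfl | rfl | rfl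
    · exact self_mem_closedNbhd z
    · exact mem_closedNbhd.2 (Or.inr hx.2)
    · exact mem_closedNbhd.2 (Or.inr hy.2)

/-- Two triangles through `v` use four slots of the three-element neighbourhood of `v`, so they
share an edge. -/
lemma IsTriangle.eq_of_mem (hcubic : G.IsRegularOfDegree 3) (hfree : SemiClosedTwinFree G)
    {t₁ t₂ : Finset V} (ht₁ : IsTriangle G t₁) (ht₂ : IsTriangle G t₂) {v : V} (hv₁ : v ∈ t₁)
    (hv₂ : v ∈ t₂) : t₁ = t₂ := by
  obtain ⟨x, hx⟩ := inter_nonempty_of_card_lt_card_add_card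
    (ht₁.erase_subset_neighborFinset hv₁) (ht₂.erase_subset_neighborFinset hv₂)
    (by rw [ht₁.card_erase hv₁, ht₂.card_erase hv₂, card_neighborFinset_eq_degree, hcubic v]
        norm_num)
  rw [mem_inter] at hx
  have hvx : G.Adj v x := (mem_neighborFinset ..).1 (ht₁.erase_subset_neighborFinset hv₁ hx.1)
  exact ht₁.eq_of_mem_of_mem ht₂ hvx.ne (hfree.commonNeighbors_subsingleton hcubic hvx) hv₁
    (mem_of_mem_erase hx.1) hv₂ (mem_of_mem_erase hx.2)

lemma IsTriangle.neighborFinset_eq_insert_erase (hcubic : G.IsRegularOfDegree 3)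
    {t : Finset V} (ht : IsTriangle G t) {u v : V} (hu : u ∈ t) (hv : v ∉ t)
    (huv : G.Adj u v) : G.neighborFinset u = insert v (t.erase u) := by
  refine (eq_of_subset_of_card_le ?_ ?_).symm
  · exact insert_subset ((mem_neighborFinset ..).2 huv) (ht.erase_subset_neighborFinset hu)
  · rw [card_insert_of_notMem fun h => hv (mem_of_mem_erase h), ht.card_erase hu,
      card_neighborFinset_eq_degree, hcubic u]

lemma AdjToTriangle.isForced (hcubic : G.IsRegularOfDegree 3) {v : V}
    (h : AdjToTriangle G v) : IsForced G v := by
  obtain ⟨u, t, hvu, ht, hut, hvt⟩ := h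
  obtain ⟨w, hw⟩ : (t.erase u).Nonempty := card_pos.1 (by rw [ht.card_erase hut]; norm_num)
  have hwt := mem_of_mem_erase hw
  refine ⟨u, w, (ne_of_mem_erase hw).symm, fun z ⟨hzu, hzw⟩ => ?_⟩
  have hz : z = v ∨ z ∈ t := by
    rcases mem_closedNbhd.1 hzu with rfl | hz
    · exact Or.inr hut
    · rw [← mem_neighborFinset, ht.neighborFinset_eq_insert_erase hcubic hut hvt hvu.symm,
        mem_insert] at hz
      exact hz.imp_right mem_of_mem_erase
  refine hz.resolve_right fun hzt => hzw (mem_closedNbhd.2 ?_)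
  by_cases hzw' : z = w
  · exact Or.inl hzw'
  · exact Or.inr (ht.2 w hwt z hzt (Ne.symm hzw'))

lemma IsForced.hasOpenTwin_or_adjToTriangle (hcubic : G.IsRegularOfDegree 3)
    (hfree : SemiClosedTwinFree G) {v : V} (h : IsForced G v) :
    HasOpenTwin G v ∨ AdjToTriangle G v := by
  obtain ⟨u, w, huw, hsub⟩ := h
  obtain ⟨y, hyu, hyw⟩ := Set.not_subset.1 (hfree u w huw)
  obtain rfl : y = v := hsub ⟨hyu, hyw⟩
  have hrest : ∀ z ∈ closedNbhd G u, z ≠ y → z ∈ closedNbhd G w := fun z hz hzy =>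
    by_contra fun hzw => hzy (hsub ⟨hz, hzw⟩)
  have hwy : w ≠ y := fun h => hyw (h ▸ self_mem_closedNbhd w)
  rcases mem_closedNbhd.1 hyu with rfl | huy
  · left
    refine ⟨w, hwy, eq_of_subset_of_card_le (fun z hz => ?_) ?_⟩
    · rw [mem_neighborFinset] at hz ⊢
      refine (mem_closedNbhd.1 (hrest z (mem_closedNbhd.2 (Or.inr hz)) hz.ne')).resolve_left ?_
      rintro rfl
      exact hyw (mem_closedNbhd.2 (Or.inr hz.symm))
    · rw [card_neighborFinset_eq_degree, card_neighborFinset_eq_degree, hcubic y, hcubic w]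
  · right
    have hwu : G.Adj w u :=
      (mem_closedNbhd.1 (hrest u (self_mem_closedNbhd u) huy.ne)).resolve_left huw
    obtain ⟨x, hx, hxyw⟩ := exists_mem_notMem_of_card_lt_card (s := {y, w})
      (t := G.neighborFinset u)
      (by rw [card_neighborFinset_eq_degree, hcubic u]; exact card_le_two.trans_lt (by norm_num))
    rw [mem_neighborFinset] at hx
    simp only [mem_insert, mem_singleton, not_or] at hxyw
    have hwx : G.Adj w x :=
      (mem_closedNbhd.1 (hrest x (mem_closedNbhd.2 (Or.inr hx)) hxyw.1)).resolve_left hxyw.2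
    refine ⟨u, {u, w, x}, huy.symm, isTriangle_insert_insert_singleton hwu.symm hx hwx,
      mem_insert_self _ _, ?_⟩
    simp only [mem_insert, mem_singleton, not_or]
    exact ⟨huy.ne', hwy.symm, Ne.symm hxyw.1⟩

lemma HasOpenTwin.not_inTriangle (hcubic : G.IsRegularOfDegree 3) (hfree : SemiClosedTwinFree G)
    {v : V} (h : HasOpenTwin G v) : ¬ InTriangle G v := by
  rintro ⟨t, ht, hvt⟩
  obtain ⟨w, hwv, hN⟩ := h
  obtain ⟨a, b, hab, hab'⟩ := card_eq_two.1 (ht.card_erase hvt)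
  have hsub := ht.erase_subset_neighborFinset hvt
  rw [hab'] at hsub
  have hcommon : ∀ z, G.neighborFinset v = G.neighborFinset z → z ∈ G.commonNeighbors a b := by
    intro z hz
    rw [hz, insert_subset_iff, singleton_subset_iff, mem_neighborFinset, mem_neighborFinset]
      at hsub
    exact G.mem_commonNeighbors.2 ⟨hsub.1.symm, hsub.2.symm⟩
  have hadj : G.Adj a b := ht.2 a (mem_of_mem_erase (by rw [hab']; exact mem_insert_self a _)) b
    (mem_of_mem_erase (by rw [hab']; simp)) hab
  exact hwv (hfree.commonNeighbors_subsingleton hcubic hadj (hcommon w hN) (hcommon v rfl))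

lemma AdjToTriangle.inTriangle (hcubic : G.IsRegularOfDegree 3) (hfree : SemiClosedTwinFree G)
    (hall : ∀ z, HasOpenTwin G z ∨ AdjToTriangle G z) {v : V} (h : AdjToTriangle G v) :
    InTriangle G v := by
  obtain ⟨u, t, hvu, ht, hut, hvt⟩ := h
  rcases hall u with htwin | ⟨u', t', huu', ht', hu't', hut'⟩
  · exact absurd ⟨t, ht, hut⟩ (htwin.not_inTriangle hcubic hfree)
  · rw [← mem_neighborFinset, ht.neighborFinset_eq_insert_erase hcubic hut hvt hvu.symm,
      mem_insert] at huu'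
    rcases huu' with rfl | hu't
    · exact ⟨t', ht', hu't'⟩
    · exact absurd (ht.eq_of_mem hcubic hfree ht' (mem_of_mem_erase hu't) hu't' ▸ hut) hut'

lemma HasOpenTwin.not_inTriangle_of_adj (hcubic : G.IsRegularOfDegree 3)
    (hfree : SemiClosedTwinFree G) {v a : V} (h : HasOpenTwin G v) (hva : G.Adj v a) :
    ¬ InTriangle G a := by
  rintro ⟨t, ht, hat⟩
  obtain ⟨w, hwv, hN⟩ := h
  have hwa : G.Adj w a := by rw [← mem_neighborFinset, ← hN, mem_neighborFinset]; exact hva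
  obtain ⟨z, hz⟩ := inter_nonempty_of_card_lt_card_add_card (u := {v, w})
    (ht.erase_subset_neighborFinset hat)
    (by simp only [insert_subset_iff, singleton_subset_iff, mem_neighborFinset]
        exact ⟨hva.symm, hwa.symm⟩)
    (by rw [ht.card_erase hat, card_pair hwv.symm, card_neighborFinset_eq_degree, hcubic a]
        norm_num)
  rw [mem_inter, mem_insert, mem_singleton] at hz
  have hzt := mem_of_mem_erase hz.1
  rcases hz.2 with rfl | rfl
  · exact HasOpenTwin.not_inTriangle hcubic hfree ⟨w, hwv, hN⟩ ⟨t, ht, hzt⟩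
  · exact HasOpenTwin.not_inTriangle hcubic hfree ⟨v, hwv.symm, hN.symm⟩ ⟨t, ht, hzt⟩

/-- A vertex outside every triangle has an open twin, and so do all its neighbours; this forces
its component to be `K₃,₃`. -/
lemma card_le_six_of_not_inTriangle (hconn : G.Connected) (hcubic : G.IsRegularOfDegree 3)
    (hfree : SemiClosedTwinFree G) (hall : ∀ z, HasOpenTwin G z ∨ InTriangle G z) {v : V}
    (hv : ¬ InTriangle G v) : Fintype.card V ≤ 6 := by
  have hdeg : ∀ z, (G.neighborFinset z).card = 3 := hcubic
  have htwin := (hall v).resolve_right hv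
  set Y := G.neighborFinset v
  have hpartner : ∀ a ∈ Y, ∃ b ∈ Y, b ≠ a ∧ G.neighborFinset a = G.neighborFinset b := by
    intro a ha
    rw [mem_neighborFinset] at ha
    obtain ⟨b, hba, hN⟩ := (hall a).resolve_right (htwin.not_inTriangle_of_adj hcubic hfree ha)
    refine ⟨b, ?_, hba, hN⟩
    have hvb : v ∈ G.neighborFinset b := hN ▸ (mem_neighborFinset ..).2 ha.symm
    exact (mem_neighborFinset ..).2 ((mem_neighborFinset ..).1 hvb).symm
  obtain ⟨a, ha⟩ : Y.Nonempty := card_pos.1 (by rw [hdeg]; norm_num)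
  set X := G.neighborFinset a
  have hY : ∀ y ∈ Y, G.neighborFinset y = X := fun y hy =>
    apply_eq_apply_of_card_eq_three _ (hdeg v) hpartner hy ha
  have hX : ∀ x ∈ X, G.neighborFinset x = Y := by
    intro x hx
    refine (eq_of_subset_of_card_le (fun y hy => ?_) (by rw [hdeg, hdeg])).symm
    rw [← hY y hy, mem_neighborFinset] at hx
    exact (mem_neighborFinset ..).2 hx.symm
  have hclosed : ∀ x ∈ (↑(X ∪ Y) : Set V), ∀ y, G.Adj x y → y ∈ (↑(X ∪ Y) : Set V) := by
    intro x hx y hxy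
    rw [← mem_neighborFinset] at hxy
    rcases mem_union.1 (mem_coe.1 hx) with hx | hx
    · exact mem_union_right _ (hX x hx ▸ hxy)
    · exact mem_union_left _ (hY x hx ▸ hxy)
  calc Fintype.card V = (univ : Finset V).card := card_univ.symm
    _ ≤ (X ∪ Y).card := card_le_card fun y _ =>
        hconn.mem_of_forall_adj_mem (mem_union_right _ ha) hclosed y
    _ ≤ X.card + Y.card := card_union_le X Y
    _ = 6 := by rw [hdeg, hdeg]

lemma adjToTriangle_of_triangle_partition (hcubic : G.IsRegularOfDegree 3)
    {𝒯 : Finset (Finset V)} (h𝒯 : ∀ t ∈ 𝒯, IsTriangle G t)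
    (hpart : ∀ v : V, ∃! t, t ∈ 𝒯 ∧ v ∈ t) (v : V) : AdjToTriangle G v := by
  obtain ⟨t, ⟨ht𝒯, hvt⟩, hunique⟩ := hpart v
  obtain ⟨c, hc, hct⟩ := exists_mem_notMem_of_card_lt_card (s := t.erase v)
    (t := G.neighborFinset v)
    (by rw [(h𝒯 t ht𝒯).card_erase hvt, card_neighborFinset_eq_degree, hcubic v]; norm_num)
  rw [mem_neighborFinset] at hc
  obtain ⟨t', ⟨ht'𝒯, hct'⟩, -⟩ := hpart c
  refine ⟨c, t', hc, h𝒯 t' ht'𝒯, hct', fun hvt' => hct ?_⟩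
  rw [hunique t' ⟨ht'𝒯, hvt'⟩] at hct'
  exact mem_erase.2 ⟨hc.ne', hct'⟩

lemma forall_isForced_iff_exists_triangle_partition (hconn : G.Connected)
    (hcubic : G.IsRegularOfDegree 3) (hfree : SemiClosedTwinFree G)
    (hn : 6 < Fintype.card V) :
    (∀ v, IsForced G v) ↔
      ∃ 𝒯 : Finset (Finset V), (∀ t ∈ 𝒯, IsTriangle G t) ∧ ∀ v : V, ∃! t, t ∈ 𝒯 ∧ v ∈ t := by
  classical
  constructor
  · intro hforced
    have hall : ∀ z, HasOpenTwin G z ∨ AdjToTriangle G z := fun z =>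
      (hforced z).hasOpenTwin_or_adjToTriangle hcubic hfree
    have htri : ∀ v, InTriangle G v := fun v => by_contra fun hv =>
      (card_le_six_of_not_inTriangle hconn hcubic hfree
        (fun z => (hall z).imp_right (AdjToTriangle.inTriangle hcubic hfree hall)) hv).not_gt hn
    refine ⟨univ.filter (IsTriangle G), fun t ht => (mem_filter.1 ht).2, fun v => ?_⟩
    obtain ⟨t, ht, hvt⟩ := htri v
    exact ⟨t, ⟨mem_filter.2 ⟨mem_univ t, ht⟩, hvt⟩, fun t' ⟨ht', hvt'⟩ =>
      (mem_filter.1 ht').2.eq_of_mem hcubic hfree ht hvt' hvt⟩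
  · rintro ⟨𝒯, h𝒯, hpart⟩ v
    exact (adjToTriangle_of_triangle_partition hcubic h𝒯 hpart v).isForced hcubic

end Cubic

theorem stmt_14 {V : Type*} [Fintype V] [DecidableEq V]
    (G : SimpleGraph V) [DecidableRel G.Adj]
    (hconn : G.Connected) (hcubic : G.IsRegularOfDegree 3)
    (hn : 8 ≤ Fintype.card V)
    (hadmits : ∃ S : Set V, IsSIC G S) :
    sInf {m : ℕ | ∃ S : Set V, IsSIC G S ∧ S.ncard = m} = Fintype.card V ↔
      ∃ 𝒯 : Finset (Finset V), (∀ t ∈ 𝒯, IsTriangle G t) ∧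
        ∀ v : V, ∃! t, t ∈ 𝒯 ∧ v ∈ t := by
  obtain ⟨S, hS⟩ := hadmits
  have hdeg : ∀ v, ∃ a, G.Adj v a := fun v =>
    (G.degree_pos_iff_exists_adj v).1 (by rw [hcubic v]; norm_num)
  rw [sInf_ncard_isSIC_eq_card_iff ⟨S, hS⟩ hdeg]
  exact forall_isForced_iff_exists_triangle_partition hconn hcubic hS.semiClosedTwinFree
    (by omega)
end

section
/- Let G be a cubic graph on n ≥ 8 vertices admitting a self-identifying code with SIC(G) = n. Then n is divisible by 6. -/
section Aux

variable {V : Type*} [Fintype V] {G : SimpleGraph V} [DecidableRel G.Adj]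

lemma deg3 (hcubic : G.IsRegularOfDegree 3) (v : V) : (G.neighborFinset v).card = 3 :=
  hcubic v

lemma nbrs_eq (hcubic : G.IsRegularOfDegree 3) {p a b c : V}
    (ha : G.Adj p a) (hb : G.Adj p b) (hc : G.Adj p c)
    (hab : a ≠ b) (hac : a ≠ c) (hbc : b ≠ c) :
    ∀ x, G.Adj p x → x = a ∨ x = b ∨ x = c := by
  classical
  have hsub : ({a, b, c} : Finset V) ⊆ G.neighborFinset p := by
    intro y hy
    rw [Finset.mem_insert, Finset.mem_insert, Finset.mem_singleton] at hy
    rw [SimpleGraph.mem_neighborFinset]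
    rcases hy with rfl | rfl | rfl
    · exact ha
    · exact hb
    · exact hc
  have hcard : ({a, b, c} : Finset V).card = 3 :=
    Finset.card_eq_three.mpr ⟨a, b, c, hab, hac, hbc, rfl⟩
  have heq : ({a, b, c} : Finset V) = G.neighborFinset p :=
    Finset.eq_of_subset_of_card_le hsub (by rw [deg3 hcubic, hcard])
  intro x hx
  have hmem : x ∈ ({a, b, c} : Finset V) := by
    rw [heq, SimpleGraph.mem_neighborFinset]; exact hx
  simpa using hmem

lemma third (hcubic : G.IsRegularOfDegree 3) {p a b : V}
    (ha : G.Adj p a) (hb : G.Adj p b) (hab : a ≠ b) :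
    ∃ c, G.Adj p c ∧ c ≠ a ∧ c ≠ b := by
  classical
  have hcard2 : ({a, b} : Finset V).card ≤ 2 := by
    apply le_trans (Finset.card_insert_le _ _)
    simp
  have hle := Finset.le_card_sdiff ({a, b} : Finset V) (G.neighborFinset p)
  rw [deg3 hcubic] at hle
  have hpos : 0 < ((G.neighborFinset p) \ ({a, b} : Finset V)).card := by omega
  obtain ⟨c, hc⟩ := Finset.card_pos.mp hpos
  rw [Finset.mem_sdiff, SimpleGraph.mem_neighborFinset] at hc
  refine ⟨c, hc.1, ?_, ?_⟩
  · intro h; exact hc.2 (by simp [h])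
  · intro h; exact hc.2 (by simp [h])

lemma no_ctwins (tf : ∀ u v : V, u ≠ v → ∃ x, (x = u ∨ G.Adj u x) ∧ ¬(x = v ∨ G.Adj v x))
    {p q : V} (hpq : G.Adj p q) (h : ∀ x, G.Adj p x → x ≠ q → G.Adj q x) : False := by
  obtain ⟨x, hx1, hx2⟩ := tf p q hpq.ne
  push_neg at hx2
  rcases hx1 with rfl | hx1
  · exact hx2.2 hpq.symm
  · rcases eq_or_ne x q with rfl | hne
    · exact hx2.1 rfl
    · exact hx2.2 (h x hx1 hne)

lemma triC (hcubic : G.IsRegularOfDegree 3)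
    (tf : ∀ u v : V, u ≠ v → ∃ x, (x = u ∨ G.Adj u x) ∧ ¬(x = v ∨ G.Adj v x))
    {p q r s t : V} (hpq : G.Adj p q) (hpr : G.Adj p r) (hqr : G.Adj q r)
    (hps : G.Adj p s) (hpt : G.Adj p t) (hst : G.Adj s t) :
    (s = q ∧ t = r) ∨ (s = r ∧ t = q) := by
  have key : ∀ s' t' : V, G.Adj p s' → G.Adj p t' → G.Adj s' t' → s' = q → t' = r := by
    intro s' t' hps' hpt' hs't' hq
    subst hq
    by_contra htr
    apply no_ctwins tf hpq
    intro z hpz hzq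
    rcases nbrs_eq hcubic hpq hpr hpt' hqr.ne hs't'.ne (fun h => htr h.symm) z hpz with
      rfl | rfl | rfl
    · exact absurd rfl hzq
    · exact hqr
    · exact hs't'
  have key2 : ∀ s' t' : V, G.Adj p s' → G.Adj p t' → G.Adj s' t' → s' = r → t' = q := by
    intro s' t' hps' hpt' hs't' hr
    subst hr
    by_contra htq
    apply no_ctwins tf hpr
    intro z hpz hzr
    rcases nbrs_eq hcubic hpq hpr hpt' hqr.ne (fun h => htq h.symm) hs't'.ne z hpz with
      rfl | rfl | rfl
    · exact hqr.symm
    · exact absurd rfl hzr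
    · exact hs't'
  by_cases hsq : s = q
  · exact Or.inl ⟨hsq, key s t hps hpt hst hsq⟩
  by_cases hsr : s = r
  · exact Or.inr ⟨hsr, key2 s t hps hpt hst hsr⟩
  rcases nbrs_eq hcubic hpq hpr hps hqr.ne (fun h => hsq h.symm) (fun h => hsr h.symm) t hpt with
    rfl | rfl | rfl
  · exact absurd (key t s hpt hps hst.symm rfl) hsr
  · exact absurd (key2 t s hpt hps hst.symm rfl) hsq
  · exact absurd rfl hst.ne

lemma noTwinTri (hcubic : G.IsRegularOfDegree 3)
    (tf : ∀ u v : V, u ≠ v → ∃ x, (x = u ∨ G.Adj u x) ∧ ¬(x = v ∨ G.Adj v x))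
    {u v b u' : V} (huv : G.Adj u v) (hub : G.Adj u b)
    (hvb : G.Adj v b) (hne : u' ≠ u)
    (htw : G.neighborFinset u = G.neighborFinset u') : False := by
  have hu'v : G.Adj u' v := by
    have h : v ∈ G.neighborFinset u' := by
      rw [← htw, SimpleGraph.mem_neighborFinset]; exact huv
    rwa [SimpleGraph.mem_neighborFinset] at h
  have hu'b : G.Adj u' b := by
    have h : b ∈ G.neighborFinset u' := by
      rw [← htw, SimpleGraph.mem_neighborFinset]; exact hub
    rwa [SimpleGraph.mem_neighborFinset] at h
  apply no_ctwins tf hvb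
  intro z hvz hzb
  rcases nbrs_eq hcubic huv.symm hvb hu'v.symm hub.ne (Ne.symm hne) hu'b.ne.symm z hvz with
    rfl | rfl | rfl
  · exact hub.symm
  · exact absurd rfl hzb
  · exact hu'b.symm

lemma extNbr (hcubic : G.IsRegularOfDegree 3)
    (tf : ∀ u v : V, u ≠ v → ∃ x, (x = u ∨ G.Adj u x) ∧ ¬(x = v ∨ G.Adj v x))
    (dich : ∀ w : V, (∃ v, w ≠ v ∧ ¬G.Adj w v ∧ G.neighborFinset w = G.neighborFinset v) ∨
      (∃ u v b, G.Adj w u ∧ G.Adj u v ∧ G.Adj u b ∧ G.Adj v b ∧ ¬(w = v ∨ G.Adj v w)))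
    {y u v b : V} (hyTri : ¬∃ p q, G.Adj y p ∧ G.Adj y q ∧ G.Adj p q)
    (hyu : G.Adj y u) (huv : G.Adj u v) (hub : G.Adj u b) (hvb : G.Adj v b)
    (hyv : ¬(y = v ∨ G.Adj v y)) : False := by
  rcases dich u with ⟨u', hne, _, htw⟩ | ⟨u2, w2, c2, huu2, h2a, h2b, h2c, hu2⟩
  · exact noTwinTri hcubic tf huv hub hvb (Ne.symm hne) htw
  · have hvny : v ≠ y := fun h => hyv (Or.inl h.symm)
    have hbny : b ≠ y := by rintro rfl; exact hyv (Or.inr hvb)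
    rcases nbrs_eq hcubic huv hub hyu.symm hvb.ne hvny hbny u2 huu2 with rfl | rfl | rfl
    · -- u2 = v
      rcases triC hcubic tf huv.symm hvb hub h2a h2b h2c with ⟨h7, h8⟩ | ⟨h7, h8⟩
      · exact hu2 (Or.inl h7.symm)
      · exact hu2 (Or.inr (h7 ▸ hub.symm))
    · -- u2 = b
      rcases triC hcubic tf hub.symm hvb.symm huv h2a h2b h2c with ⟨h7, h8⟩ | ⟨h7, h8⟩
      · exact hu2 (Or.inl h7.symm)
      · exact hu2 (Or.inr (h7 ▸ huv.symm))
    · -- u2 = y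
      exact hyTri ⟨w2, c2, h2a, h2b, h2c⟩

lemma allTri (hcubic : G.IsRegularOfDegree 3) (hconn : G.Connected) (hn : 8 ≤ Fintype.card V)
    (tf : ∀ u v : V, u ≠ v → ∃ x, (x = u ∨ G.Adj u x) ∧ ¬(x = v ∨ G.Adj v x))
    (dich : ∀ w : V, (∃ v, w ≠ v ∧ ¬G.Adj w v ∧ G.neighborFinset w = G.neighborFinset v) ∨
      (∃ u v b, G.Adj w u ∧ G.Adj u v ∧ G.Adj u b ∧ G.Adj v b ∧ ¬(w = v ∨ G.Adj v w)))
    (x : V) : ∃ p q, G.Adj x p ∧ G.Adj x q ∧ G.Adj p q := by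
  classical
  by_contra hx
  rcases dich x with ⟨v, hxv, hnadj, hN⟩ | ⟨u, v2, b2, h1, h2, h3, h4, h5⟩
  swap
  · exact extNbr hcubic tf dich hx h1 h2 h3 h4 h5
  obtain ⟨a, b, c, hab, hac, hbc, habc⟩ := Finset.card_eq_three.mp (deg3 hcubic x)
  have hmemx : ∀ y, G.Adj x y ↔ (y = a ∨ y = b ∨ y = c) := by
    intro y
    rw [← SimpleGraph.mem_neighborFinset, habc]; simp
  have hmemv : ∀ y, G.Adj v y ↔ (y = a ∨ y = b ∨ y = c) := by
    intro y
    rw [← SimpleGraph.mem_neighborFinset, ← hN, habc]; simp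
  have hxa : G.Adj x a := (hmemx a).mpr (Or.inl rfl)
  have hxb : G.Adj x b := (hmemx b).mpr (Or.inr (Or.inl rfl))
  have hxc : G.Adj x c := (hmemx c).mpr (Or.inr (Or.inr rfl))
  have hva : G.Adj v a := (hmemv a).mpr (Or.inl rfl)
  have hvb' : G.Adj v b := (hmemv b).mpr (Or.inr (Or.inl rfl))
  have hvc : G.Adj v c := (hmemv c).mpr (Or.inr (Or.inr rfl))
  have hnab : ¬G.Adj a b := fun h => hx ⟨a, b, hxa, hxb, h⟩
  have hnac : ¬G.Adj a c := fun h => hx ⟨a, c, hxa, hxc, h⟩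
  have hnbc : ¬G.Adj b c := fun h => hx ⟨b, c, hxb, hxc, h⟩
  have hTriv : ∀ p q, G.Adj v p → G.Adj v q → G.Adj p q → False := by
    intro p q hp hq hpq
    rcases (hmemv p).mp hp with rfl | rfl | rfl <;>
      rcases (hmemv q).mp hq with rfl | rfl | rfl <;>
      first
        | exact hpq.ne rfl
        | exact hnab hpq
        | exact hnac hpq
        | exact hnbc hpq
        | exact hnab hpq.symm
        | exact hnac hpq.symm
        | exact hnbc hpq.symm
  have innerT : ∀ y, G.Adj x y → G.Adj v y →
      ¬∃ u2 w2 c2, G.Adj y u2 ∧ G.Adj u2 w2 ∧ G.Adj u2 c2 ∧ G.Adj w2 c2 ∧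
        ¬(y = w2 ∨ G.Adj w2 y) := by
    rintro y hxy hvy ⟨u2, w2, c2, hyu2, ha2, hb2, hc2, hy2⟩
    obtain ⟨t, hyt, htx, htv⟩ := third hcubic hxy.symm hvy.symm hxv
    have hymem := nbrs_eq hcubic hxy.symm hvy.symm hyt hxv (Ne.symm htx) (Ne.symm htv)
    rcases hymem u2 hyu2 with rfl | rfl | rfl
    · exact hx ⟨w2, c2, ha2, hb2, hc2⟩
    · exact hTriv w2 c2 ha2 hb2 hc2
    · have hyTri : ¬∃ p q, G.Adj y p ∧ G.Adj y q ∧ G.Adj p q := by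
        rintro ⟨p, q, hp, hq, hpq⟩
        rcases hymem p hp with rfl | rfl | rfl <;> rcases hymem q hq with rfl | rfl | rfl
        · exact hpq.ne rfl
        · exact hnadj hpq
        · exact hx ⟨y, q, hxy, hpq, hq⟩
        · exact hnadj hpq.symm
        · exact hpq.ne rfl
        · exact hx ⟨y, q, hxy, (hmemx q).mpr ((hmemv q).mp hpq), hq⟩
        · exact hx ⟨y, p, hxy, hpq.symm, hp⟩
        · exact hx ⟨y, p, hxy, (hmemx p).mpr ((hmemv p).mp hpq.symm), hp⟩
        · exact hpq.ne rfl
      exact extNbr hcubic tf dich hyTri hyt ha2 hb2 hc2 hy2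
  have hOeach : ∀ y, G.Adj x y → G.Adj v y →
      ∃ y', y ≠ y' ∧ ¬G.Adj y y' ∧ G.neighborFinset y = G.neighborFinset y' := by
    intro y hxy hvy
    rcases dich y with hO | hT
    · exact hO
    · exact absurd hT (innerT y hxy hvy)
  obtain ⟨a', haa', _, hNa⟩ := hOeach a hxa hva
  obtain ⟨b', hbb', _, hNb⟩ := hOeach b hxb hvb'
  obtain ⟨c', hcc', _, hNc⟩ := hOeach c hxc hvc
  have htwinmem : ∀ y y' : V, G.Adj x y → G.neighborFinset y = G.neighborFinset y' →
      (y' = a ∨ y' = b ∨ y' = c) := by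
    intro y y' hxy hNy
    have hy'x : G.Adj y' x := by
      have h : x ∈ G.neighborFinset y' := by
        rw [← hNy, SimpleGraph.mem_neighborFinset]; exact hxy.symm
      rwa [SimpleGraph.mem_neighborFinset] at h
    exact (hmemx y').mp hy'x.symm
  -- show all three neighbor finsets are equal
  have hall : G.neighborFinset a = G.neighborFinset b ∧
      G.neighborFinset a = G.neighborFinset c := by
    rcases htwinmem a a' hxa hNa with rfl | rfl | rfl
    · exact absurd rfl haa'
    · -- a' = b
      constructor
      · exact hNa
      · rcases htwinmem c c' hxc hNc with rfl | rfl | rfl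
        · exact hNc.symm
        · exact hNa.trans hNc.symm
        · exact absurd rfl hcc'
    · -- a' = c
      constructor
      · rcases htwinmem b b' hxb hNb with rfl | rfl | rfl
        · exact hNb.symm
        · exact absurd rfl hbb'
        · exact hNa.trans hNb.symm
      · exact hNa
  obtain ⟨hNab, hNac⟩ := hall
  obtain ⟨t, hat, htx, htv⟩ := third hcubic hxa.symm hva.symm hxv
  have hmema : ∀ y, G.Adj a y → y = x ∨ y = v ∨ y = t :=
    nbrs_eq hcubic hxa.symm hva.symm hat hxv (Ne.symm htx) (Ne.symm htv)
  have hmemb : ∀ y, G.Adj b y → y = x ∨ y = v ∨ y = t := by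
    intro y hy
    apply hmema
    have h : y ∈ G.neighborFinset a := by
      rw [hNab, SimpleGraph.mem_neighborFinset]; exact hy
    rwa [SimpleGraph.mem_neighborFinset] at h
  have hmemc : ∀ y, G.Adj c y → y = x ∨ y = v ∨ y = t := by
    intro y hy
    apply hmema
    have h : y ∈ G.neighborFinset a := by
      rw [hNac, SimpleGraph.mem_neighborFinset]; exact hy
    rwa [SimpleGraph.mem_neighborFinset] at h
  have hbt : G.Adj b t := by
    have h : t ∈ G.neighborFinset b := by
      rw [← hNab, SimpleGraph.mem_neighborFinset]; exact hat
    rwa [SimpleGraph.mem_neighborFinset] at h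
  have hct : G.Adj c t := by
    have h : t ∈ G.neighborFinset c := by
      rw [← hNac, SimpleGraph.mem_neighborFinset]; exact hat
    rwa [SimpleGraph.mem_neighborFinset] at h
  have hmemt : ∀ y, G.Adj t y → y = a ∨ y = b ∨ y = c :=
    nbrs_eq hcubic hat.symm hbt.symm hct.symm hab hac hbc
  set W : Finset V := {x, v, t, a, b, c} with hW
  have hclosed : ∀ p ∈ W, ∀ y, G.Adj p y → y ∈ W := by
    intro p hp y hy
    simp only [hW, Finset.mem_insert, Finset.mem_singleton] at hp ⊢
    rcases hp with rfl | rfl | rfl | rfl | rfl | rfl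
    · rcases (hmemx y).mp hy with rfl | rfl | rfl <;> tauto
    · rcases (hmemv y).mp hy with rfl | rfl | rfl <;> tauto
    · rcases hmemt y hy with rfl | rfl | rfl <;> tauto
    · rcases hmema y hy with rfl | rfl | rfl <;> tauto
    · rcases hmemb y hy with rfl | rfl | rfl <;> tauto
    · rcases hmemc y hy with rfl | rfl | rfl <;> tauto
  have hwalk : ∀ (p q : V), G.Walk p q → p ∈ W → q ∈ W := by
    intro p q w
    induction w with
    | nil => exact id
    | cons h w ih => exact fun hp => ih (hclosed _ hp _ h)
  have huniv : ∀ q : V, q ∈ W := by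
    intro q
    obtain ⟨w⟩ := hconn.preconnected x q
    exact hwalk x q w (by simp [hW])
  have h6 : W.card ≤ 6 := by
    have h1 := Finset.card_insert_le x ({v, t, a, b, c} : Finset V)
    have h2 := Finset.card_insert_le v ({t, a, b, c} : Finset V)
    have h3 := Finset.card_insert_le t ({a, b, c} : Finset V)
    have h4 := Finset.card_insert_le a ({b, c} : Finset V)
    have h5 := Finset.card_insert_le b ({c} : Finset V)
    have h0 : ({c} : Finset V).card = 1 := Finset.card_singleton c
    simp only [hW]
    omega
  have hle : Fintype.card V ≤ 6 := by
    rw [← Finset.card_univ]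
    exact le_trans (Finset.card_le_card fun q _ => huniv q) h6
  omega

end Aux

theorem stmt_15 {V : Type*} [Fintype V] (G : SimpleGraph V) [DecidableRel G.Adj]
    (hconn : G.Connected) (hcubic : G.IsRegularOfDegree 3)
    (hn : 8 ≤ Fintype.card V)
    (hadmits : ∃ S : Set V, IsSIC G S)
    (hmax : sInf {m : ℕ | ∃ S : Set V, IsSIC G S ∧ S.ncard = m} = Fintype.card V) :
    6 ∣ Fintype.card V := by
  classical
  obtain ⟨S0, hS0⟩ := hadmits
  have tf : ∀ u v : V, u ≠ v → ∃ x, (x = u ∨ G.Adj u x) ∧ ¬(x = v ∨ G.Adj v x) := by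
    intro u v huv
    obtain ⟨xx, hx1, hx2⟩ := (hS0.2 u v huv).1
    refine ⟨xx, ?_, ?_⟩
    · simpa [closedNbhd] using hx1.1
    · intro hc
      apply hx2
      refine ⟨?_, hx1.2⟩
      simpa [closedNbhd] using hc
  have F2 : ∀ w : V, ∃ u v, u ≠ v ∧
      ∀ x : V, (x = u ∨ G.Adj u x) → ¬(x = v ∨ G.Adj v x) → x = w := by
    intro w
    by_contra hcon
    push_neg at hcon
    have hSIC : IsSIC G ({w}ᶜ : Set V) := by
      constructor
      · intro y
        obtain ⟨z, hz⟩ : ∃ z, G.Adj y z := by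
          have h3 := deg3 hcubic y
          have hne : (G.neighborFinset y).Nonempty := Finset.card_pos.mp (by omega)
          obtain ⟨z, hz⟩ := hne
          exact ⟨z, by rwa [SimpleGraph.mem_neighborFinset] at hz⟩
        rcases eq_or_ne y w with rfl | hyw
        · exact ⟨z, ⟨by simp [closedNbhd, hz], by simp [hz.ne']⟩⟩
        · exact ⟨y, ⟨by simp [closedNbhd], by simp [hyw]⟩⟩
      · intro u v huv
        constructor
        · obtain ⟨xx, h1, h2, h3⟩ := hcon u v huv
          refine ⟨xx, ⟨⟨by simpa [closedNbhd] using h1, by simp [h3]⟩, ?_⟩⟩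
          intro hc
          have hmv : xx = v ∨ G.Adj v xx := by simpa [closedNbhd] using hc.1
          rcases hmv with h | h
          · exact h2.1 h
          · exact h2.2 h
        · obtain ⟨xx, h1, h2, h3⟩ := hcon v u huv.symm
          refine ⟨xx, ⟨⟨by simpa [closedNbhd] using h1, by simp [h3]⟩, ?_⟩⟩
          intro hc
          have hmv : xx = u ∨ G.Adj u xx := by simpa [closedNbhd] using hc.1
          rcases hmv with h | h
          · exact h2.1 h
          · exact h2.2 h
    have hne : ({w}ᶜ : Set V) ≠ Set.univ := by
      intro h
      have : w ∈ ({w}ᶜ : Set V) := h.symm ▸ Set.mem_univ w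
      simp at this
    have hssub : ({w}ᶜ : Set V) ⊂ Set.univ := Set.ssubset_univ_iff.mpr hne
    have hlt : ({w}ᶜ : Set V).ncard < Fintype.card V := by
      have := Set.ncard_lt_ncard hssub Set.finite_univ
      rwa [Set.ncard_univ, Nat.card_eq_fintype_card] at this
    have hmem : ({w}ᶜ : Set V).ncard ∈ {m : ℕ | ∃ S : Set V, IsSIC G S ∧ S.ncard = m} :=
      ⟨_, hSIC, rfl⟩
    have hinf := Nat.sInf_le hmem
    rw [hmax] at hinf
    omega
  have dich : ∀ w : V, (∃ v, w ≠ v ∧ ¬G.Adj w v ∧ G.neighborFinset w = G.neighborFinset v) ∨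
      (∃ u v b, G.Adj w u ∧ G.Adj u v ∧ G.Adj u b ∧ G.Adj v b ∧ ¬(w = v ∨ G.Adj v w)) := by
    intro w
    obtain ⟨u, v, huv, hsub⟩ := F2 w
    obtain ⟨x0, hx1, hx2⟩ := tf u v huv
    have hx0 : x0 = w := hsub x0 hx1 hx2
    subst hx0
    rcases hx1 with h | hadj
    · subst h
      left
      have hwnv : x0 ≠ v := fun hh => hx2 (Or.inl hh)
      have hwa : ¬G.Adj x0 v := fun hh => hx2 (Or.inr hh.symm)
      refine ⟨v, hwnv, hwa, Finset.eq_of_subset_of_card_le ?_ ?_⟩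
      · intro y hy
        have hy' : G.Adj x0 y := by rwa [SimpleGraph.mem_neighborFinset] at hy
        rw [SimpleGraph.mem_neighborFinset]
        by_cases hcase : y = v ∨ G.Adj v y
        · rcases hcase with rfl | hh
          · exact absurd hy' hwa
          · exact hh
        · exact absurd (hsub y (Or.inr hy') hcase) hy'.ne'
      · rw [deg3 hcubic, deg3 hcubic]
    · right
      have hvu : G.Adj v u := by
        by_cases hcase : u = v ∨ G.Adj v u
        · rcases hcase with rfl | hh
          · exact absurd rfl huv
          · exact hh
        · exact absurd (hsub u (Or.inl rfl) hcase) hadj.ne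
      have hwv : x0 ≠ v := fun hh => hx2 (Or.inl hh)
      obtain ⟨b, hub, hbv, hbw⟩ := third hcubic hvu.symm hadj (Ne.symm hwv)
      have hvb : G.Adj v b := by
        by_cases hcase : b = v ∨ G.Adj v b
        · rcases hcase with rfl | hh
          · exact absurd rfl hbv
          · exact hh
        · exact absurd (hsub b (Or.inr hub) hcase) hbw
      exact ⟨u, v, b, hadj.symm, hvu.symm, hub, hvb, hx2⟩
  have hall := allTri hcubic hconn hn tf dich
  -- the family of triangles
  set 𝒯 : Finset (Finset V) :=
    Finset.univ.filter
      (fun T => ∃ a b c, G.Adj a b ∧ G.Adj a c ∧ G.Adj b c ∧ T = {a, b, c}) with h𝒯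
  have hcard3 : ∀ T ∈ 𝒯, T.card = 3 := by
    intro T hT
    rw [h𝒯, Finset.mem_filter] at hT
    obtain ⟨-, a, b, c, h1, h2, h3, rfl⟩ := hT
    exact Finset.card_eq_three.mpr ⟨a, b, c, h1.ne, h2.ne, h3.ne, rfl⟩
  have hcentered : ∀ T ∈ 𝒯, ∀ z ∈ T,
      ∃ p q, G.Adj z p ∧ G.Adj z q ∧ G.Adj p q ∧ T = {z, p, q} := by
    intro T hT z hz
    rw [h𝒯, Finset.mem_filter] at hT
    obtain ⟨-, a, b, c, h1, h2, h3, rfl⟩ := hT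
    simp only [Finset.mem_insert, Finset.mem_singleton] at hz
    rcases hz with rfl | rfl | rfl
    · exact ⟨b, c, h1, h2, h3, rfl⟩
    · exact ⟨a, c, h1.symm, h3, h2, by ext y; simp; tauto⟩
    · exact ⟨a, b, h2.symm, h3.symm, h1, by ext y; simp; tauto⟩
  have hdisj : ∀ T1 ∈ 𝒯, ∀ T2 ∈ 𝒯, T1 ≠ T2 → Disjoint T1 T2 := by
    intro T1 h1 T2 h2 hne
    by_contra hnd
    obtain ⟨z, hz1, hz2⟩ := Finset.not_disjoint_iff.mp hnd
    obtain ⟨p, q, hp, hq, hpq, rfl⟩ := hcentered T1 h1 z hz1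
    obtain ⟨s, t, hs, ht, hst, rfl⟩ := hcentered T2 h2 z hz2
    rcases triC hcubic tf hp hq hpq hs ht hst with ⟨rfl, rfl⟩ | ⟨rfl, rfl⟩
    · exact hne rfl
    · exact hne (by ext y; simp; tauto)
  have huniv : (Finset.univ : Finset V) = 𝒯.biUnion (fun T => T) := by
    apply Finset.ext
    intro y
    simp only [Finset.mem_univ, true_iff, Finset.mem_biUnion]
    obtain ⟨p, q, h1, h2, h3⟩ := hall y
    refine ⟨{y, p, q}, ?_, by simp⟩
    rw [h𝒯, Finset.mem_filter]
    exact ⟨Finset.mem_univ _, y, p, q, h1, h2, h3, rfl⟩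
  have h3dvd : (3 : ℕ) ∣ Fintype.card V := by
    have hc : Fintype.card V = ∑ T ∈ 𝒯, T.card := by
      rw [← Finset.card_univ, huniv, Finset.card_biUnion hdisj]
    rw [Finset.sum_congr rfl hcard3, Finset.sum_const, smul_eq_mul] at hc
    exact ⟨𝒯.card, by omega⟩
  have h2dvd : (2 : ℕ) ∣ Fintype.card V := by
    have hh := SimpleGraph.sum_degrees_eq_twice_card_edges G
    have h32 : ∑ v : V, G.degree v = 3 * Fintype.card V := by
      rw [Finset.sum_congr rfl (fun v _ => hcubic v), Finset.sum_const, smul_eq_mul,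
        Finset.card_univ, mul_comm]
    rw [h32] at hh
    have h23 : (2 : ℕ) ∣ 3 * Fintype.card V := ⟨_, hh⟩
    exact Nat.Coprime.dvd_of_dvd_mul_left (by decide) h23
  omega
end
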